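/- arXiv:1510.01908 — 2 statements merged into one kernel-verified Lean document; each statement's English description precedes it below -/
import Mathlib

section
/- Let G be a compact group acting on a set M and q ∈ M. If p ∈ Fix(G_q) has the same stabilizer as q (i.e. G_p = G_q), then the intersection of the orbit G·p with Fix(G_q) equals the orbit N(G_q)·p of p under the normalizer of G_q. -/
/-!
If `g • p` is fixed by `H = G_q = G_p`, then `g⁻¹ H g ⊆ H`. The elements `g` with this
property form a submonoid, closed because `H` (a stabilizer in a Hausdorff space) is closed.
In a compact group `g⁻¹` is a cluster point of the powers `gⁿ`, so a closed submonoid is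
a subgroup; hence also `g H g⁻¹ ⊆ H`, i.e. `g` normalizes `H`.
-/

namespace Submonoid

variable {G : Type*} [Group G] [TopologicalSpace G] [IsTopologicalGroup G] [CompactSpace G]

theorem inv_mem_of_isClosed {S : Submonoid G} (hS : IsClosed (S : Set G)) {x : G}
    (hx : x ∈ S) : x⁻¹ ∈ S := by
  have hgen : _root_.closure (closure {x} : Set G) ⊆ S :=
    hS.closure_subset_iff.2 (closure_le.2 (Set.singleton_subset_iff.2 hx))
  apply hgen
  rw [closure_submonoidClosure_eq_closure_subgroupClosure]
  exact _root_.subset_closure (inv_mem (Subgroup.subset_closure (Set.mem_singleton x)))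

end Submonoid

namespace Subgroup

variable {G : Type*} [Group G]

def conjInvLeSubmonoid (H : Subgroup G) : Submonoid G where
  carrier := {g | ∀ h ∈ H, g⁻¹ * h * g ∈ H}
  one_mem' h hh := by simpa using hh
  mul_mem' {a b} ha hb h hh := by
    simpa only [mul_inv_rev, mul_assoc] using hb _ (ha h hh)

theorem isClosed_conjInvLeSubmonoid [TopologicalSpace G] [IsTopologicalGroup G]
    {H : Subgroup G} (hH : IsClosed (H : Set G)) : IsClosed (H.conjInvLeSubmonoid : Set G) := by
  have hinter : (H.conjInvLeSubmonoid : Set G) = ⋂ h ∈ H, (fun g => g⁻¹ * h * g) ⁻¹' H := by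
    ext; simp [conjInvLeSubmonoid]
  exact hinter ▸ isClosed_biInter fun _ _ => hH.preimage (by fun_prop)

theorem mem_normalizer_iff_conj_inv_mem [TopologicalSpace G] [IsTopologicalGroup G]
    [CompactSpace G] {H : Subgroup G} (hH : IsClosed (H : Set G)) {g : G} :
    g ∈ normalizer (H : Set G) ↔ ∀ h ∈ H, g⁻¹ * h * g ∈ H := by
  refine ⟨fun hg h hh => by simpa using (mem_normalizer_iff.1 (inv_mem hg) h).1 hh,
    fun hg => mem_normalizer_iff.2 fun h => ⟨fun hh => ?_, fun hh => ?_⟩⟩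
  · have hg' : g⁻¹ ∈ H.conjInvLeSubmonoid :=
      Submonoid.inv_mem_of_isClosed (isClosed_conjInvLeSubmonoid hH) hg
    simpa using hg' h hh
  · simpa [mul_assoc] using hg _ hh

end Subgroup

namespace MulAction

variable {G M : Type*} [Group G] [MulAction G M]

theorem isClosed_stabilizer [TopologicalSpace G] [TopologicalSpace M] [T1Space M]
    [ContinuousSMul G M] (q : M) : IsClosed (stabilizer G q : Set G) :=
  isClosed_singleton.preimage (continuous_id.smul continuous_const : Continuous fun g : G => g • q)

theorem smul_mem_fixedPoints_iff (H : Subgroup G) (g : G) (p : M) :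
    (∀ h ∈ H, h • g • p = g • p) ↔ ∀ h ∈ H, g⁻¹ * h * g ∈ stabilizer G p := by
  refine forall₂_congr fun h _ => ?_
  rw [mem_stabilizer_iff, mul_smul, mul_smul, inv_smul_eq_iff]

end MulAction

theorem orbit_inter_fix_eq_normalizer_orbit_general
    {G M : Type*} [Group G] [TopologicalSpace G] [IsTopologicalGroup G] [CompactSpace G]
    [TopologicalSpace M] [T2Space M] [MulAction G M] [ContinuousSMul G M]
    (q p : M)
    (hst : MulAction.stabilizer G p = MulAction.stabilizer G q) :
    MulAction.orbit G p ∩ {x : M | ∀ h ∈ MulAction.stabilizer G q, h • x = x}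
      = (fun g : G => g • p) '' (Subgroup.normalizer (MulAction.stabilizer G q : Set G) : Set G) := by
  have hfix (g : G) : (∀ h ∈ MulAction.stabilizer G q, h • g • p = g • p) ↔
      g ∈ Subgroup.normalizer (MulAction.stabilizer G q : Set G) := by
    rw [MulAction.smul_mem_fixedPoints_iff, hst,
      Subgroup.mem_normalizer_iff_conj_inv_mem (MulAction.isClosed_stabilizer q)]
  ext x
  constructor
  · rintro ⟨⟨g, rfl⟩, hx⟩
    exact ⟨g, (hfix g).1 hx, rfl⟩
  · rintro ⟨g, hg, rfl⟩
    exact ⟨MulAction.mem_orbit p g, (hfix g).2 hg⟩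

/-- For a compact group `G` acting on a Hausdorff space `M`, `q ∈ M` and
`p ∈ Fix(G_q)` with `G_p = G_q`, the intersection of the orbit `G·p` with `Fix(G_q)`
equals the orbit of `p` under the normalizer `N(G_q)`. -/
theorem orbit_inter_fix_eq_normalizer_orbit
    {G M : Type*} [Group G] [TopologicalSpace G] [IsTopologicalGroup G] [CompactSpace G]
    [TopologicalSpace M] [T2Space M] [MulAction G M] [ContinuousSMul G M]
    (q p : M)
    (hp : ∀ h ∈ MulAction.stabilizer G q, h • p = p)
    (hst : MulAction.stabilizer G p = MulAction.stabilizer G q) :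
    MulAction.orbit G p ∩ {x : M | ∀ h ∈ MulAction.stabilizer G q, h • x = x}
      = (fun g : G => g • p) '' (Subgroup.normalizer (MulAction.stabilizer G q : Set G) : Set G) :=
  orbit_inter_fix_eq_normalizer_orbit_general q p hst
end

section
/- Let A be a geodesic metric space and C ⊆ A closed. Then C is convex (every pair of points of C is joined by some minimal geodesic of A contained in C) if and only if the metric on C induced from A is intrinsic (i.e. the induced length metric on C equals the restricted metric) and every geodesic of (C, induced metric) is also a geodesic of A. -/
open Set

/-- The induced intrinsic (length) metric on a subset `C` of a metric space: the infimum
of lengths (total variations) of continuous paths in `C` joining the two points. -/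
noncomputable def inducedLengthDist {A : Type*} [MetricSpace A] (C : Set A) (x y : A) :
    ENNReal :=
  ⨅ (γ : ℝ → A) (_ : ContinuousOn γ (Icc 0 1)) (_ : MapsTo γ (Icc 0 1) C)
    (_ : γ 0 = x) (_ : γ 1 = y), eVariationOn γ (Icc 0 1)

/-- `γ` (on `[0,1]`) is a minimal geodesic of `A` lying in `C`, parametrized
proportionally to arc length. -/
def IsMinGeodesicIn {A : Type*} [MetricSpace A] (C : Set A) (γ : ℝ → A) : Prop :=
  MapsTo γ (Icc 0 1) C ∧
    ∀ s ∈ Icc (0:ℝ) 1, ∀ t ∈ Icc (0:ℝ) 1,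
      dist (γ s) (γ t) = |s - t| * dist (γ 0) (γ 1)

/-- `γ` (on `[0,1]`) is a minimal geodesic of `C` equipped with the induced intrinsic
metric. -/
def IsMinGeodesicOfInduced {A : Type*} [MetricSpace A] (C : Set A) (γ : ℝ → A) : Prop :=
  MapsTo γ (Icc 0 1) C ∧
    ∀ s ∈ Icc (0:ℝ) 1, ∀ t ∈ Icc (0:ℝ) 1,
      inducedLengthDist C (γ s) (γ t)
        = ENNReal.ofReal |s - t| * inducedLengthDist C (γ 0) (γ 1)

/-!
If `C` is convex, a minimal geodesic of `A` inside `C` is a path in `C` of length `d(x, y)`, so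
the induced length metric equals `d` on `C`, and then the geodesics of the two metrics coincide.

Conversely, if the induced length metric equals `d` on `C`, a path in `C` of length less than
`d(x, y) + ε` contains a point equidistant from `x` and `y` (intermediate value theorem), which
is an approximate midpoint; since `C` is closed and `A` is proper, a limit of these is an exact
midpoint. Repeated bisection then gives, for each `n`, a chain of `2 ^ n + 1` points of `C` with
equal steps whose ends are `d(x, y)` apart, so it lies on a straight line; the points at dyadic
parameters thus satisfy the geodesic equation, and completeness of `C` extends them to `[0, 1]`.
-/

open Filter Topology

section Chain

variable {X : Type*} [PseudoMetricSpace X]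

theorem dist_le_mul_of_dist_succ_eq {p : ℕ → X} {N : ℕ} {δ : ℝ}
    (hstep : ∀ k < N, dist (p k) (p (k + 1)) = δ) {j k : ℕ} (hjk : j ≤ k) (hk : k ≤ N) :
    dist (p j) (p k) ≤ ((k : ℝ) - j) * δ := by
  calc dist (p j) (p k) ≤ ∑ i ∈ Finset.Ico j k, dist (p i) (p (i + 1)) :=
        dist_le_Ico_sum_dist p hjk
    _ = ∑ _i ∈ Finset.Ico j k, δ :=
        Finset.sum_congr rfl fun i hi => hstep i (by simp at hi; omega)
    _ = ((k : ℝ) - j) * δ := by simp [Nat.cast_sub hjk]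

theorem dist_eq_abs_mul_of_dist_succ_eq {p : ℕ → X} {N : ℕ} {δ : ℝ}
    (hstep : ∀ k < N, dist (p k) (p (k + 1)) = δ) (hend : dist (p 0) (p N) = N * δ)
    {j k : ℕ} (hj : j ≤ N) (hk : k ≤ N) :
    dist (p j) (p k) = |(j : ℝ) - k| * δ := by
  wlog hjk : j ≤ k generalizing j k
  · rw [dist_comm, abs_sub_comm, this hk hj (by omega)]
  have h0j := dist_le_mul_of_dist_succ_eq hstep (Nat.zero_le j) hj
  have hjk' := dist_le_mul_of_dist_succ_eq hstep hjk hk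
  have hkN := dist_le_mul_of_dist_succ_eq hstep hk le_rfl
  have htri := dist_triangle4 (p 0) (p j) (p k) (p N)
  rw [abs_of_nonpos (by simpa using hjk)]
  push_cast at h0j
  linarith

end Chain

section Dyadic

variable {X : Type*} (mid : X → X → X) (x y : X)

/-- `dyadicPoint mid x y n k` is the point with parameter `k / 2 ^ n` on the curve from `x` to
`y` obtained by repeated bisection with `mid`. -/
def dyadicPoint : ℕ → ℕ → X
  | 0, k => if k = 0 then x else y
  | n + 1, k =>
    if k % 2 = 0 then dyadicPoint n (k / 2)
    else mid (dyadicPoint n (k / 2)) (dyadicPoint n (k / 2 + 1))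

@[simp]
theorem dyadicPoint_succ_two_mul (n k : ℕ) :
    dyadicPoint mid x y (n + 1) (2 * k) = dyadicPoint mid x y n k := by
  simp [dyadicPoint]

@[simp]
theorem dyadicPoint_succ_two_mul_add_one (n k : ℕ) :
    dyadicPoint mid x y (n + 1) (2 * k + 1) =
      mid (dyadicPoint mid x y n k) (dyadicPoint mid x y n (k + 1)) := by
  simp [dyadicPoint, Nat.add_mod, Nat.add_div]

theorem dyadicPoint_add_two_pow_mul (n m k : ℕ) :
    dyadicPoint mid x y (n + m) (2 ^ m * k) = dyadicPoint mid x y n k := by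
  induction m with
  | zero => simp
  | succ m ih => rw [← add_assoc, pow_succ', mul_assoc, dyadicPoint_succ_two_mul, ih]

@[simp]
theorem dyadicPoint_zero_right (n : ℕ) : dyadicPoint mid x y n 0 = x := by
  simpa [dyadicPoint] using dyadicPoint_add_two_pow_mul mid x y 0 n 0

@[simp]
theorem dyadicPoint_two_pow (n : ℕ) : dyadicPoint mid x y n (2 ^ n) = y := by
  simpa [dyadicPoint] using dyadicPoint_add_two_pow_mul mid x y 0 n 1

variable [PseudoMetricSpace X] {mid}
  (hmid : ∀ a b, dist a (mid a b) = dist a b / 2 ∧ dist (mid a b) b = dist a b / 2)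
include hmid

theorem dist_dyadicPoint_succ {n k : ℕ} (hk : k < 2 ^ n) :
    dist (dyadicPoint mid x y n k) (dyadicPoint mid x y n (k + 1)) = dist x y / 2 ^ n := by
  induction n generalizing k with
  | zero =>
    obtain rfl : k = 0 := by simpa using hk
    simp [dyadicPoint]
  | succ n ih =>
    obtain ⟨j, rfl | rfl⟩ := Nat.even_or_odd' k
    · rw [dyadicPoint_succ_two_mul, dyadicPoint_succ_two_mul_add_one, (hmid _ _).1,
        ih (by omega), pow_succ, div_div]
    · rw [dyadicPoint_succ_two_mul_add_one, show 2 * j + 1 + 1 = 2 * (j + 1) by ring,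
        dyadicPoint_succ_two_mul, (hmid _ _).2, ih (by omega), pow_succ, div_div]

theorem dist_dyadicPoint {n j k : ℕ} (hj : j ≤ 2 ^ n) (hk : k ≤ 2 ^ n) :
    dist (dyadicPoint mid x y n j) (dyadicPoint mid x y n k) =
      |(j : ℝ) - k| * (dist x y / 2 ^ n) :=
  dist_eq_abs_mul_of_dist_succ_eq (p := dyadicPoint mid x y n)
    (fun _ hk => dist_dyadicPoint_succ x y hmid hk) (by simp [mul_div_cancel₀]) hj hk

theorem dist_dyadicPoint_dyadicPoint {n m j k : ℕ} (hj : j ≤ 2 ^ n) (hk : k ≤ 2 ^ m) :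
    dist (dyadicPoint mid x y n j) (dyadicPoint mid x y m k) =
      |(j : ℝ) / 2 ^ n - k / 2 ^ m| * dist x y := by
  have hj' : 2 ^ m * j ≤ 2 ^ (n + m) := by rw [pow_add, mul_comm]; gcongr
  have hk' : 2 ^ n * k ≤ 2 ^ (n + m) := by rw [pow_add]; gcongr
  rw [← dyadicPoint_add_two_pow_mul mid x y n m j, ← dyadicPoint_add_two_pow_mul mid x y m n k,
    add_comm m n, dist_dyadicPoint x y hmid hj' hk']
  have h : (j : ℝ) / 2 ^ n - k / 2 ^ m =
      (((2 ^ m * j : ℕ) : ℝ) - (2 ^ n * k : ℕ)) / 2 ^ (n + m) := by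
    push_cast; rw [pow_add]; field_simp
  rw [h, abs_div, abs_of_pos (by positivity : (0 : ℝ) < 2 ^ (n + m))]
  ring

end Dyadic

section Midpoint

variable {X : Type*} [MetricSpace X]

theorem exists_isMinGeodesicIn_univ_of_forall_exists_midpoint [CompleteSpace X]
    (hmid : ∀ a b : X, ∃ m, dist a m = dist a b / 2 ∧ dist m b = dist a b / 2) (x y : X) :
    ∃ γ : ℝ → X, IsMinGeodesicIn univ γ ∧ γ 0 = x ∧ γ 1 = y := by
  choose mid hmid using hmid
  let a : ℕ → ℝ → ℝ := fun n t => ⌊t * 2 ^ n⌋₊ / 2 ^ n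
  let g : ℕ → ℝ → X := fun n t => dyadicPoint mid x y n ⌊t * 2 ^ n⌋₊
  have ha : ∀ t ∈ Icc (0 : ℝ) 1, Tendsto (a · t) atTop (𝓝 t) := fun t ht =>
    (tendsto_nat_floor_mul_div_atTop ht.1).comp (tendsto_pow_atTop_atTop_of_one_lt one_lt_two)
  have hg : ∀ s ∈ Icc (0 : ℝ) 1, ∀ t ∈ Icc (0 : ℝ) 1, ∀ n m,
      dist (g n s) (g m t) = dist (a n s) (a m t) * dist x y := by
    have hfloor : ∀ t ∈ Icc (0 : ℝ) 1, ∀ n : ℕ, ⌊t * 2 ^ n⌋₊ ≤ 2 ^ n := fun t ht n =>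
      Nat.floor_le_of_le (by push_cast; nlinarith [ht.2, pow_pos (two_pos (α := ℝ)) n])
    intro s hs t ht n m
    exact dist_dyadicPoint_dyadicPoint x y hmid (hfloor s hs n) (hfloor t ht m)
  have hcauchy : ∀ t ∈ Icc (0 : ℝ) 1, CauchySeq (g · t) := by
    intro t ht
    rw [cauchySeq_iff_tendsto_dist_atTop_0]
    simpa only [hg t ht t ht, zero_mul] using
      (cauchySeq_iff_tendsto_dist_atTop_0.1 (ha t ht).cauchySeq).mul_const (dist x y)
  have : Nonempty X := ⟨x⟩
  let γ : ℝ → X := fun t => limUnder atTop (g · t)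
  have hγ : ∀ t ∈ Icc (0 : ℝ) 1, Tendsto (g · t) atTop (𝓝 (γ t)) := fun t ht =>
    (hcauchy t ht).tendsto_limUnder
  have hdist : ∀ s ∈ Icc (0 : ℝ) 1, ∀ t ∈ Icc (0 : ℝ) 1,
      dist (γ s) (γ t) = |s - t| * dist x y := by
    intro s hs t ht
    refine tendsto_nhds_unique ((hγ s hs).dist (hγ t ht)) ?_
    simpa only [hg s hs t ht, Real.dist_eq] using ((ha s hs).sub (ha t ht)).abs.mul_const _
  have hγ0 : γ 0 = x :=
    tendsto_nhds_unique (hγ 0 (left_mem_Icc.2 zero_le_one)) (by simp [g])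
  have hγ1 : γ 1 = y := by
    have hfloor (n : ℕ) : ⌊(2 : ℝ) ^ n⌋₊ = 2 ^ n := by exact_mod_cast Nat.floor_natCast (2 ^ n)
    exact tendsto_nhds_unique (hγ 1 (right_mem_Icc.2 zero_le_one)) (by simp [g, hfloor])
  refine ⟨γ, ⟨mapsTo_univ _ _, fun s hs t ht => ?_⟩, hγ0, hγ1⟩
  rw [hγ0, hγ1, hdist s hs t ht]

theorem exists_isMinGeodesicIn_of_forall_exists_midpoint {C : Set X} (hC : IsComplete C)
    (hmid : ∀ a ∈ C, ∀ b ∈ C, ∃ m ∈ C, dist a m = dist a b / 2 ∧ dist m b = dist a b / 2)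
    {x y : X} (hx : x ∈ C) (hy : y ∈ C) :
    ∃ γ : ℝ → X, IsMinGeodesicIn C γ ∧ γ 0 = x ∧ γ 1 = y := by
  have := hC.completeSpace_coe
  have hmid' : ∀ a b : C, ∃ m : C, dist a m = dist a b / 2 ∧ dist m b = dist a b / 2 :=
    fun a b => let ⟨m, hm, h⟩ := hmid a a.2 b b.2; ⟨⟨m, hm⟩, h⟩
  obtain ⟨γ, ⟨-, hγ⟩, hγ0, hγ1⟩ :=
    exists_isMinGeodesicIn_univ_of_forall_exists_midpoint hmid' ⟨x, hx⟩ ⟨y, hy⟩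
  exact ⟨fun t => γ t, ⟨fun t _ => (γ t).2, hγ⟩, by simp [hγ0], by simp [hγ1]⟩

end Midpoint

theorem edist_add_edist_le_eVariationOn {α E : Type*} [LinearOrder α] [PseudoEMetricSpace E]
    (f : α → E) {a t b : α} (hat : a ≤ t) (htb : t ≤ b) :
    edist (f a) (f t) + edist (f t) (f b) ≤ eVariationOn f (Icc a b) := by
  have ht : t ∈ Icc a b := ⟨hat, htb⟩
  calc edist (f a) (f t) + edist (f t) (f b)
      ≤ eVariationOn f (Icc a b ∩ Icc a t) + eVariationOn f (Icc a b ∩ Icc t b) :=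
        add_le_add (eVariationOn.edist_le f ⟨left_mem_Icc.2 (hat.trans htb), le_rfl, hat⟩
            ⟨ht, hat, le_rfl⟩)
          (eVariationOn.edist_le f ⟨ht, le_rfl, htb⟩
            ⟨right_mem_Icc.2 (hat.trans htb), htb, le_rfl⟩)
    _ = eVariationOn f (Icc a b) := by rw [eVariationOn.Icc_add_Icc f hat htb ht, inter_self]

section LengthMetric

open Metric

variable {A : Type*} [MetricSpace A] {C : Set A}

theorem ofReal_dist_le_inducedLengthDist (C : Set A) (x y : A) :
    ENNReal.ofReal (dist x y) ≤ inducedLengthDist C x y := by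
  refine le_iInf fun γ => le_iInf fun _ => le_iInf fun _ => le_iInf fun h0 => le_iInf fun h1 => ?_
  rw [← h0, ← h1, ← edist_dist]
  exact eVariationOn.edist_le γ (left_mem_Icc.2 zero_le_one) (right_mem_Icc.2 zero_le_one)

theorem IsMinGeodesicIn.lipschitzOnWith {γ : ℝ → A} (hγ : IsMinGeodesicIn C γ) :
    LipschitzOnWith (nndist (γ 0) (γ 1)) γ (Icc 0 1) :=
  LipschitzOnWith.of_dist_le_mul fun s hs t ht => by
    rw [hγ.2 s hs t ht, coe_nndist, Real.dist_eq, mul_comm]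

theorem IsMinGeodesicIn.eVariationOn_le {γ : ℝ → A} (hγ : IsMinGeodesicIn C γ) :
    eVariationOn γ (Icc 0 1) ≤ edist (γ 0) (γ 1) := by
  have hid : eVariationOn id (Icc (0 : ℝ) 1) = 1 := by
    rw [← inter_self (Icc (0 : ℝ) 1), monotoneOn_id.eVariationOn_eq (left_mem_Icc.2 zero_le_one)
      (right_mem_Icc.2 zero_le_one)]
    simp
  calc eVariationOn γ (Icc 0 1) = eVariationOn (γ ∘ id) (Icc 0 1) := rfl
    _ ≤ nndist (γ 0) (γ 1) * eVariationOn id (Icc 0 1) :=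
      hγ.lipschitzOnWith.comp_eVariationOn_le (mapsTo_id _)
    _ = edist (γ 0) (γ 1) := by rw [hid, mul_one, edist_nndist]

theorem IsMinGeodesicIn.inducedLengthDist_eq {γ : ℝ → A} (hγ : IsMinGeodesicIn C γ) :
    inducedLengthDist C (γ 0) (γ 1) = ENNReal.ofReal (dist (γ 0) (γ 1)) := by
  refine le_antisymm ?_ (ofReal_dist_le_inducedLengthDist C _ _)
  rw [inducedLengthDist]
  exact iInf_le_of_le γ <| iInf_le_of_le hγ.lipschitzOnWith.continuousOn <|
    iInf_le_of_le hγ.1 <| iInf_le_of_le rfl <| iInf_le_of_le rfl <|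
      hγ.eVariationOn_le.trans_eq (edist_dist _ _)

theorem IsMinGeodesicOfInduced.isMinGeodesicIn_univ
    (hint : ∀ x ∈ C, ∀ y ∈ C, inducedLengthDist C x y = ENNReal.ofReal (dist x y))
    {γ : ℝ → A} (hγ : IsMinGeodesicOfInduced C γ) : IsMinGeodesicIn univ γ := by
  refine ⟨mapsTo_univ _ _, fun s hs t ht => ?_⟩
  have h := hγ.2 s hs t ht
  rw [hint _ (hγ.1 hs) _ (hγ.1 ht), hint _ (hγ.1 (left_mem_Icc.2 zero_le_one)) _
    (hγ.1 (right_mem_Icc.2 zero_le_one)), ← ENNReal.ofReal_mul (abs_nonneg _)] at h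
  exact (ENNReal.ofReal_eq_ofReal_iff dist_nonneg (by positivity)).1 h

theorem exists_dist_le_half_of_inducedLengthDist_lt {x y : A} {L : ℝ}
    (h : inducedLengthDist C x y < ENNReal.ofReal L) :
    ∃ m ∈ C, dist x m ≤ L / 2 ∧ dist m y ≤ L / 2 := by
  simp only [inducedLengthDist, iInf_lt_iff] at h
  obtain ⟨γ, hcont, hγC, rfl, rfl, hlen⟩ := h
  obtain ⟨t, ht, hbal⟩ : ∃ t ∈ Icc (0 : ℝ) 1, dist (γ 0) (γ t) - dist (γ t) (γ 1) = 0 :=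
    intermediate_value_Icc zero_le_one (by fun_prop) ⟨by simp, by simp⟩
  have hsum := (edist_add_edist_le_eVariationOn γ ht.1 ht.2).trans_lt hlen
  rw [edist_dist, edist_dist, ← ENNReal.ofReal_add dist_nonneg dist_nonneg,
    ENNReal.ofReal_lt_ofReal_iff'] at hsum
  exact ⟨γ t, hγC ht, by linarith [hsum.1], by linarith [hsum.1]⟩

theorem exists_midpoint_of_inducedLengthDist_eq [ProperSpace A] (hC : IsClosed C) {x y : A}
    (hxy : inducedLengthDist C x y = ENNReal.ofReal (dist x y)) :
    ∃ m ∈ C, dist x m = dist x y / 2 ∧ dist m y = dist x y / 2 := by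
  let r : ℕ → ℝ := fun n => (dist x y + 1 / (n + 1)) / 2
  have hr : Tendsto r atTop (𝓝 (dist x y / 2)) := by
    simpa [r] using (tendsto_one_div_add_atTop_nhds_zero_nat.const_add (dist x y)).div_const 2
  let K : ℕ → Set A := fun n => C ∩ closedBall x (r n) ∩ closedBall y (r n)
  obtain ⟨m, hm⟩ : (⋂ n, K n).Nonempty := by
    refine IsCompact.nonempty_iInter_of_sequence_nonempty_isCompact_isClosed K (fun n => ?_)
      (fun n => ?_) (((isCompact_closedBall x _).inter_left hC).inter_right isClosed_closedBall)
      (fun n => (hC.inter isClosed_closedBall).inter isClosed_closedBall)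
    · have hrn : r (n + 1) ≤ r n := by simp only [r]; gcongr; linarith
      exact inter_subset_inter (inter_subset_inter_right _ (closedBall_subset_closedBall hrn))
        (closedBall_subset_closedBall hrn)
    · obtain ⟨m, hmC, hxm, hmy⟩ := exists_dist_le_half_of_inducedLengthDist_lt
        (C := C) (L := dist x y + 1 / (n + 1)) (by
          rw [hxy, ENNReal.ofReal_lt_ofReal_iff']
          exact ⟨lt_add_of_pos_right _ (by positivity), by positivity⟩)
      exact ⟨m, ⟨hmC, by rwa [mem_closedBall, dist_comm]⟩, hmy⟩
  have hmK := mem_iInter.1 hm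
  have hxm : dist x m ≤ dist x y / 2 :=
    ge_of_tendsto' hr fun n => by simpa [dist_comm] using (hmK n).1.2
  have hmy : dist m y ≤ dist x y / 2 := ge_of_tendsto' hr fun n => (hmK n).2
  have := dist_triangle x m y
  exact ⟨m, (hmK 0).1.1, by linarith, by linarith⟩

end LengthMetric

theorem convex_iff_intrinsic_and_geodesics_agree_general
    {A : Type*} [MetricSpace A] [ProperSpace A]
    (C : Set A) (hC : IsClosed C) :
    (∀ x ∈ C, ∀ y ∈ C, ∃ γ : ℝ → A, IsMinGeodesicIn C γ ∧ γ 0 = x ∧ γ 1 = y)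
      ↔ ((∀ x ∈ C, ∀ y ∈ C, inducedLengthDist C x y = ENNReal.ofReal (dist x y)) ∧
         (∀ γ : ℝ → A, IsMinGeodesicOfInduced C γ → IsMinGeodesicIn (univ : Set A) γ)) := by
  refine ⟨fun hconvex => ?_, fun ⟨hint, _⟩ x hx y hy => ?_⟩
  · have hint : ∀ x ∈ C, ∀ y ∈ C, inducedLengthDist C x y = ENNReal.ofReal (dist x y) := by
      intro x hx y hy
      obtain ⟨γ, hγ, rfl, rfl⟩ := hconvex x hx y hy
      exact hγ.inducedLengthDist_eq
    exact ⟨hint, fun γ hγ => hγ.isMinGeodesicIn_univ hint⟩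
  · exact exists_isMinGeodesicIn_of_forall_exists_midpoint hC.isComplete
      (fun a ha b hb => exists_midpoint_of_inducedLengthDist_eq hC (hint a ha b hb)) hx hy

/-- In a complete, locally compact (proper) geodesic metric space `A`, a closed subset
`C` is convex (every pair of points of `C` is joined by a minimal geodesic of `A` inside
`C`) iff the metric induced on `C` is intrinsic (the induced length metric equals the
restricted metric) and every geodesic of `(C, induced metric)` is a geodesic of `A`. -/
theorem convex_iff_intrinsic_and_geodesics_agree
    {A : Type*} [MetricSpace A] [ProperSpace A]
    (hgeo : ∀ x y : A, ∃ γ : ℝ → A, IsMinGeodesicIn (univ : Set A) γ ∧ γ 0 = x ∧ γ 1 = y)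
    (C : Set A) (hC : IsClosed C) :
    (∀ x ∈ C, ∀ y ∈ C, ∃ γ : ℝ → A, IsMinGeodesicIn C γ ∧ γ 0 = x ∧ γ 1 = y)
      ↔ ((∀ x ∈ C, ∀ y ∈ C, inducedLengthDist C x y = ENNReal.ofReal (dist x y)) ∧
         (∀ γ : ℝ → A, IsMinGeodesicOfInduced C γ → IsMinGeodesicIn (univ : Set A) γ)) :=
  convex_iff_intrinsic_and_geodesics_agree_general C hC
end
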